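/- If y = f_u(x), then for every integer i, (u_i + x_i)(1/u_{i+1} + 1/x_{i+1}) = (u_i + y_i)(1/u_{i+1} + 1/y_{i+1}). -/

import Mathlib

/-
Write `t_j = t_{n-1,j}`. The heart of the matter is the three-term relation
`x_{j+1} t_{j+1} + u_{j-1} t_{j-1} = (u_j + x_j) t_j`, obtained by splitting `t_{n-1}` at its
first and at its last term and using that a product of `u` (or of `x`) over a full period does not
depend on where it starts. Substituting it into the definition of `y` gives
`u_i + y_i = u_i (u_i + x_i) t_i / (x_{i+1} t_{i+1})` and
`1/u_{i+1} + 1/y_{i+1} = (u_{i+1} + x_{i+1}) t_{i+1} / (u_{i+1} u_i t_i)`, whose product is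
`(u_i + x_i)(u_{i+1} + x_{i+1}) / (u_{i+1} x_{i+1})`, the left-hand side.
-/

/- Setting: a semifield `K` (commutative associative addition `add`, multiplicative
abelian group, distributivity), a fixed `u ∈ K^n`, all `n`-tuples extended
`n`-periodically to families indexed by `ℤ`. -/

variable {K : Type*} [CommGroup K]

/-- The nonempty sum `f 0 + f 1 + ⋯ + f r` with respect to the binary operation `add`. -/
def addSum (add : K → K → K) (f : ℕ → K) : ℕ → K
  | 0 => f 0
  | r + 1 => add (addSum add f r) (f (r + 1))

/-- The element `t_{r,j} = Σ_{k=0}^{r} (∏_{i=1}^{k} x_{j+i}) · (∏_{i=k+1}^{r} u_{j+i})`. -/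
def tpoly (add : K → K → K) (u x : ℤ → K) (r : ℕ) (j : ℤ) : K :=
  addSum add
    (fun k => (∏ i ∈ Finset.Icc 1 k, x (j + i)) * ∏ i ∈ Finset.Icc (k + 1) r, u (j + i)) r

open Fin.CommRing in
/-- The `n`-periodic extension of an `n`-tuple to a family indexed by `ℤ`. -/
def extend {n : ℕ} [NeZero n] (v : Fin n → K) : ℤ → K := fun i => v (i : Fin n)

/-- The map `f_u : K^n → K^n`, sending `x` to the `n`-tuple `y` with
`y_i = u_i · (u_{i-1} t_{n-1,i-1}) / (x_{i+1} t_{n-1,i+1})`. -/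
def fu {n : ℕ} [NeZero n] (add : K → K → K) (u : Fin n → K) (x : Fin n → K) : Fin n → K :=
  fun i =>
    u i * (extend u ((i : ℤ) - 1) * tpoly add (extend u) (extend x) (n - 1) ((i : ℤ) - 1)) /
      (extend x ((i : ℤ) + 1) * tpoly add (extend u) (extend x) (n - 1) ((i : ℤ) + 1))

open Finset Fin.CommRing

section AddSum

variable {M : Type*} (add : M → M → M)

lemma addSum_congr {f g : ℕ → M} (r : ℕ) (h : ∀ k ≤ r, f k = g k) :
    addSum add f r = addSum add g r := by
  induction r with
  | zero => exact h 0 le_rfl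
  | succ r ih => rw [addSum, addSum, ih fun k hk => h k (hk.trans r.le_succ), h (r + 1) le_rfl]

lemma addSum_succ' (hassoc : ∀ a b c : M, add (add a b) c = add a (add b c)) (f : ℕ → M)
    (r : ℕ) : addSum add f (r + 1) = add (f 0) (addSum add (fun k => f (k + 1)) r) := by
  induction r with
  | zero => rfl
  | succ r ih => rw [addSum, ih, hassoc]; rfl

lemma mul_addSum [Mul M] (hd : ∀ a b c : M, a * add b c = add (a * b) (a * c)) (c : M)
    (f : ℕ → M) (r : ℕ) : c * addSum add f r = addSum add (fun k => c * f k) r := by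
  induction r with
  | zero => rfl
  | succ r ih => rw [addSum, addSum, hd, ih]

end AddSum

section Distrib

variable (add : K → K → K)

lemma add_mul_of_distrib (hd : ∀ a b c : K, a * add b c = add (a * b) (a * c)) (a b c : K) :
    add a b * c = add (a * c) (b * c) := by
  rw [mul_comm, hd, mul_comm c, mul_comm c]

lemma add_div_of_distrib (hd : ∀ a b c : K, a * add b c = add (a * b) (a * c)) (a b c : K) :
    add (a / c) (b / c) = add a b / c := by
  simp only [div_eq_mul_inv, add_mul_of_distrib add hd]

lemma add_inv_of_distrib (hd : ∀ a b c : K, a * add b c = add (a * b) (a * c))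
    (hcomm : ∀ a b : K, add a b = add b a) (a b : K) :
    add a⁻¹ b⁻¹ = add a b / (a * b) := by
  rw [← div_mul_cancel_right b a, ← div_mul_cancel_left a b, add_div_of_distrib add hd, hcomm]

end Distrib

/-- `windowProd v m j = ∏_{i=1}^{m} v (j + i)`. -/
def windowProd (v : ℤ → K) (m : ℕ) (j : ℤ) : K := ∏ i ∈ range m, v (j + 1 + i)

lemma windowProd_zero (v : ℤ → K) (j : ℤ) : windowProd v 0 j = 1 := rfl

lemma windowProd_succ (v : ℤ → K) (m : ℕ) (j : ℤ) :
    windowProd v (m + 1) j = windowProd v m j * v (j + 1 + m) :=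
  prod_range_succ _ m

lemma windowProd_succ' (v : ℤ → K) (m : ℕ) (j : ℤ) :
    windowProd v (m + 1) j = v (j + 1) * windowProd v m (j + 1) := by
  rw [windowProd, prod_range_succ', mul_comm, Nat.cast_zero, add_zero, windowProd]
  congr 1
  refine prod_congr rfl fun i _ => ?_
  push_cast
  ring_nf

lemma prod_Icc_eq_windowProd (v : ℤ → K) (j : ℤ) (a b : ℕ) :
    ∏ i ∈ Icc (a + 1) b, v (j + i) = windowProd v (b - a) (j + a) := by
  rw [← Ico_add_one_right_eq_Icc, prod_Ico_eq_prod_range, Nat.add_sub_add_right]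
  refine prod_congr rfl fun i _ => ?_
  push_cast
  ring_nf

section Tpoly

variable (add : K → K → K) (u x : ℤ → K)

lemma tpoly_eq_addSum (r : ℕ) (j : ℤ) :
    tpoly add u x r j = addSum add (fun k => windowProd x k j * windowProd u (r - k) (j + k)) r :=
  addSum_congr add r fun k _ => by
    rw [← prod_Icc_eq_windowProd, ← zero_add 1, prod_Icc_eq_windowProd, Nat.sub_zero,
      Nat.cast_zero, add_zero]

lemma tpoly_zero (j : ℤ) : tpoly add u x 0 j = 1 := by
  rw [tpoly_eq_addSum, addSum, windowProd_zero, windowProd_zero, mul_one]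

lemma tpoly_succ (hd : ∀ a b c : K, a * add b c = add (a * b) (a * c)) (r : ℕ) (j : ℤ) :
    tpoly add u x (r + 1) j =
      add (u (j + 1 + r) * tpoly add u x r j) (windowProd x (r + 1) j) := by
  rw [tpoly_eq_addSum, addSum, tpoly_eq_addSum, mul_addSum add hd, Nat.sub_self, windowProd_zero,
    mul_one]
  congr 1
  refine addSum_congr add r fun k hk => ?_
  have hidx : j + k + 1 + ((r - k : ℕ) : ℤ) = j + 1 + r := by push_cast [hk]; ring
  rw [Nat.sub_add_comm hk, windowProd_succ, hidx]
  ac_rfl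

lemma tpoly_succ' (hassoc : ∀ a b c : K, add (add a b) c = add a (add b c))
    (hd : ∀ a b c : K, a * add b c = add (a * b) (a * c)) (r : ℕ) (j : ℤ) :
    tpoly add u x (r + 1) j =
      add (windowProd u (r + 1) j) (x (j + 1) * tpoly add u x r (j + 1)) := by
  rw [tpoly_eq_addSum, addSum_succ' add hassoc, tpoly_eq_addSum, mul_addSum add hd,
    windowProd_zero, one_mul, Nat.sub_zero, Nat.cast_zero, add_zero]
  congr 1
  refine addSum_congr add r fun k _ => ?_
  rw [windowProd_succ', Nat.add_sub_add_right, mul_assoc, Nat.cast_succ, add_comm (k : ℤ) 1,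
    add_assoc]

end Tpoly

lemma Function.Periodic.mul_windowProd_eq {v : ℤ → K} {m : ℕ}
    (hv : Function.Periodic v (m + 1 : ℕ)) (a : ℤ) :
    v a * windowProd v m a = v (a + 1) * windowProd v m (a + 1) := by
  rw [← windowProd_succ', windowProd_succ, mul_comm, ← hv a]
  congr 2
  push_cast
  ring

section Periodic

variable {n : ℕ} [NeZero n]

lemma extend_congr {M : Type*} (v : Fin n → M) {a b : ℤ} (h : (a : Fin n) = b) :
    extend v a = extend v b :=
  congrArg v h

lemma extend_periodic {M : Type*} (v : Fin n → M) : Function.Periodic (extend v) n :=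
  fun a => extend_congr v (by simp)

lemma tpoly_extend_congr (add : K → K → K) (u x : Fin n → K) (r : ℕ) {a b : ℤ}
    (h : (a : Fin n) = b) :
    tpoly add (extend u) (extend x) r a = tpoly add (extend u) (extend x) r b :=
  addSum_congr add r fun k _ => by
    congr 1 <;> exact prod_congr rfl fun i _ => extend_congr _ (by push_cast [h]; rfl)

end Periodic

section ThreeTerm

variable (add : K → K → K) {U X : ℤ → K}

lemma tpoly_three_term_of_periodic_add_two
    (hassoc : ∀ a b c : K, add (add a b) c = add a (add b c))
    (hcomm : ∀ a b : K, add a b = add b a) (hd : ∀ a b c : K, a * add b c = add (a * b) (a * c))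
    {m : ℕ} (hU : Function.Periodic U (m + 2 : ℕ)) (hX : Function.Periodic X (m + 2 : ℕ))
    (j : ℤ) :
    add (X (j + 1) * tpoly add U X (m + 1) (j + 1)) (U (j - 1) * tpoly add U X (m + 1) (j - 1)) =
      add (U j) (X j) * tpoly add U X (m + 1) j := by
  have : Std.Associative add := ⟨hassoc⟩
  have : Std.Commutative add := ⟨hcomm⟩
  have hA := tpoly_succ' add U X hassoc hd m
  have hB := tpoly_succ add U X hd m
  have hU' (a b : ℤ) (h : a = b + (m + 2 : ℕ)) : U a = U b := h ▸ hU b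
  calc add (X (j + 1) * tpoly add U X (m + 1) (j + 1)) (U (j - 1) * tpoly add U X (m + 1) (j - 1))
      = add (X (j + 1) * add (U j * tpoly add U X m (j + 1)) (windowProd X (m + 1) (j + 1)))
          (U (j - 1) * add (windowProd U (m + 1) (j - 1)) (X j * tpoly add U X m j)) := by
        rw [hB, hA, sub_add_cancel, hU' (j + 1 + 1 + m) j (by push_cast; ring)]
    _ = add (U j * add (windowProd U (m + 1) j) (X (j + 1) * tpoly add U X m (j + 1)))
          (X j * add (U (j - 1) * tpoly add U X m j) (windowProd X (m + 1) j)) := by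
        -- both sides expand to the same four terms once the full-period products are aligned
        simp only [hd]
        rw [hU.mul_windowProd_eq (j - 1), sub_add_cancel, ← hX.mul_windowProd_eq j]
        ac_rfl
    _ = add (U j) (X j) * tpoly add U X (m + 1) j := by
        rw [← hA, ← hU' (j + 1 + m) (j - 1) (by push_cast; ring), ← hB,
          add_mul_of_distrib add hd]

lemma tpoly_three_term (hassoc : ∀ a b c : K, add (add a b) c = add a (add b c))
    (hcomm : ∀ a b : K, add a b = add b a) (hd : ∀ a b c : K, a * add b c = add (a * b) (a * c))
    {n : ℕ} (hn : n ≠ 0) (hU : Function.Periodic U n) (hX : Function.Periodic X n)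
    (j : ℤ) :
    add (X (j + 1) * tpoly add U X (n - 1) (j + 1)) (U (j - 1) * tpoly add U X (n - 1) (j - 1)) =
      add (U j) (X j) * tpoly add U X (n - 1) j := by
  obtain _ | _ | m := n
  · exact absurd rfl hn
  · have hU1 : U (j - 1) = U j := by simpa using (hU (j - 1)).symm
    have hX1 : X (j + 1) = X j := by simpa using hX j
    rw [Nat.sub_self, tpoly_zero, tpoly_zero, tpoly_zero, mul_one, mul_one, mul_one, hU1, hX1,
      hcomm]
  · exact tpoly_three_term_of_periodic_add_two add hassoc hcomm hd hU hX j

end ThreeTerm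

lemma extend_fu {n : ℕ} [NeZero n] (add : K → K → K) (u x : Fin n → K) (i : ℤ) :
    extend (fu add u x) i =
      extend u i * (extend u (i - 1) * tpoly add (extend u) (extend x) (n - 1) (i - 1)) /
        (extend x (i + 1) * tpoly add (extend u) (extend x) (n - 1) (i + 1)) := by
  have hi : ((((i : Fin n) : ℤ)) : Fin n) = i := by rw [Int.cast_natCast, Fin.cast_val_eq_self]
  have hsub : ((((i : Fin n) : ℤ) - 1 : ℤ) : Fin n) = ((i - 1 : ℤ) : Fin n) := by
    push_cast [hi]; rfl
  have hadd : ((((i : Fin n) : ℤ) + 1 : ℤ) : Fin n) = ((i + 1 : ℤ) : Fin n) := by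
    push_cast [hi]; rfl
  change u _ * (extend u (_ - 1) * tpoly add _ _ _ (_ - 1)) /
    (extend x (_ + 1) * tpoly add _ _ _ (_ + 1)) = _
  rw [extend_congr u hsub, extend_congr x hadd, tpoly_extend_congr add u x _ hsub,
    tpoly_extend_congr add u x _ hadd]
  rfl

lemma local_invariant_of_three_term (add : K → K → K) (hcomm : ∀ a b : K, add a b = add b a)
    (hd : ∀ a b c : K, a * add b c = add (a * b) (a * c)) {u x t y : ℤ → K}
    (ht : ∀ j, add (x (j + 1) * t (j + 1)) (u (j - 1) * t (j - 1)) = add (u j) (x j) * t j)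
    (hy : ∀ j, y j = u j * (u (j - 1) * t (j - 1)) / (x (j + 1) * t (j + 1))) (i : ℤ) :
    add (u i) (x i) * add (u (i + 1))⁻¹ (x (i + 1))⁻¹ =
      add (u i) (y i) * add (u (i + 1))⁻¹ (y (i + 1))⁻¹ := by
  have hy₀ : add (u i) (y i) = u i * (add (u i) (x i) * t i) / (x (i + 1) * t (i + 1)) := by
    rw [hy, ← ht, hd, ← add_div_of_distrib add hd, mul_div_cancel_right]
  have hy₁ : add (u (i + 1))⁻¹ (y (i + 1))⁻¹ =
      add (u (i + 1)) (x (i + 1)) * t (i + 1) / (u (i + 1) * (u i * t i)) := by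
    rw [hy, add_sub_cancel_right, inv_div, ← ht, add_sub_cancel_right,
      ← add_div_of_distrib add hd, hcomm, div_mul_cancel_right]
  rw [hy₀, hy₁, add_inv_of_distrib add hd hcomm, mul_div_assoc', div_mul_div_comm,
    div_eq_div_iff_mul_eq_mul]
  ac_rfl

/-- Theorem: if `y = f_u(x)`, then for every integer `i`,
`(u_i + x_i)(1/u_{i+1} + 1/x_{i+1}) = (u_i + y_i)(1/u_{i+1} + 1/y_{i+1})`. -/
theorem fu_local_invariant (n : ℕ) [NeZero n] (add : K → K → K)
    (hadd_assoc : ∀ a b c : K, add (add a b) c = add a (add b c))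
    (hadd_comm : ∀ a b : K, add a b = add b a)
    (hdistrib : ∀ a b c : K, a * add b c = add (a * b) (a * c))
    (u : Fin n → K)
    (x y : Fin n → K) (hy : y = fu add u x) (i : ℤ) :
    add (extend u i) (extend x i) * add (extend u (i + 1))⁻¹ (extend x (i + 1))⁻¹ =
      add (extend u i) (extend y i) * add (extend u (i + 1))⁻¹ (extend y (i + 1))⁻¹ := by
  subst hy
  exact local_invariant_of_three_term add hadd_comm hdistrib
    (tpoly_three_term add hadd_assoc hadd_comm hdistrib (NeZero.ne n) (extend_periodic u)
      (extend_periodic x))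
    (extend_fu add u x) i
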